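/- arXiv:2210.10097 — 3 statements merged into one kernel-verified Lean document; each statement's English description precedes it below -/
import Mathlib

section
/- Let (M,g,J,ω,∇) be an affine special Kähler manifold. Then for all vector fields X, the difference tensor satisfies D_X - ∇_X = (1/2)S_X = -(1/2) J (∇_X J), where D is the Levi-Civita connection of g. -/
universe u v

/-- Abstract calculus of vector fields on a manifold: `F` models the ring of smooth
functions (an `ℝ`-algebra), `X` the `F`-module of vector fields, with Lie bracket
`br` and the action `act` of vector fields on functions as derivations. -/
structure VFCalc (F : Type u) (X : Type v) [CommRing F] [Algebra ℝ F]
    [AddCommGroup X] [Module F X] where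
  br : X → X → X
  act : X → F → F
  act_add : ∀ v f g, act v (f + g) = act v f + act v g
  act_mul : ∀ v f g, act v (f * g) = f * act v g + g * act v f
  act_const : ∀ v (r : ℝ), act v (algebraMap ℝ F r) = 0
  act_addl : ∀ v w f, act (v + w) f = act v f + act w f
  act_smull : ∀ (h : F) v f, act (h • v) f = h * act v f
  br_antisymm : ∀ v w, br v w = -br w v
  br_jacobi : ∀ u v w, br u (br v w) + br v (br w u) + br w (br u v) = 0
  act_br : ∀ v w f, act (br v w) f = act v (act w f) - act w (act v f)

/-- An affine special (pseudo-)Kähler manifold, modelled abstractly: a pseudo-Kähler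
structure `(g, J, ω = g(J·,·))` together with a flat torsion-free connection `conn = ∇`
satisfying `∇ω = 0` and `d^∇ J = 0`. -/
structure ASK (F : Type u) (X : Type v) [CommRing F] [Algebra ℝ F]
    [AddCommGroup X] [Module F X] extends VFCalc F X where
  g : X → X → F
  J : X → X
  conn : X → X → X
  g_symm : ∀ v w, g v w = g w v
  g_addl : ∀ u v w, g (u + v) w = g u w + g v w
  g_smull : ∀ (f : F) v w, g (f • v) w = f * g v w
  g_nondeg : ∀ v, (∀ w, g v w = 0) → v = 0
  J_add : ∀ v w, J (v + w) = J v + J w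
  J_smul : ∀ (f : F) v, J (f • v) = f • J v
  J_sq : ∀ v, J (J v) = -v
  g_hermitian : ∀ v w, g (J v) (J w) = g v w
  conn_addl : ∀ u v w, conn (u + v) w = conn u w + conn v w
  conn_smull : ∀ (f : F) v w, conn (f • v) w = f • conn v w
  conn_addr : ∀ u v w, conn u (v + w) = conn u v + conn u w
  conn_leibniz : ∀ u (f : F) v, conn u (f • v) = act u f • v + f • conn u v
  torsion_free : ∀ v w, conn v w - conn w v = br v w
  flat : ∀ u v w, conn u (conn v w) - conn v (conn u w) - conn (br u v) w = 0
  dconnJ : ∀ v w, conn v (J w) - J (conn v w) = conn w (J v) - J (conn w v)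
  conn_omega : ∀ u v w,
    act u (g (J v) w) - g (J (conn u v)) w - g (J v) (conn u w) = 0

namespace ASK

variable {F : Type u} {X : Type v} [CommRing F] [Algebra ℝ F]
  [AddCommGroup X] [Module F X]

/-- The covariant derivative `(∇_u g)(v, w)` of the metric. -/
def covg (A : ASK F X) (u v w : X) : F :=
  A.act u (A.g v w) - A.g (A.conn u v) w - A.g v (A.conn u w)

/-- The second covariant derivative `(∇²_{u,v} g)(z, w)`. -/
def covg2 (A : ASK F X) (u v z w : X) : F :=
  A.act u (A.covg v z w) - A.covg (A.conn u v) z w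
    - A.covg v (A.conn u z) w - A.covg v z (A.conn u w)

end ASK

/-- A conical affine special Kähler (CASK) manifold: an ASK manifold together with
its Levi-Civita connection `lc = D` and a vector field `xi = ξ` satisfying
`D ξ = ∇ ξ = id`. -/
structure CASK (F : Type u) (X : Type v) [CommRing F] [Algebra ℝ F]
    [AddCommGroup X] [Module F X] extends ASK F X where
  lc : X → X → X
  lc_metric : ∀ u v w, act u (g v w) = g (lc u v) w + g v (lc u w)
  lc_torsion_free : ∀ v w, lc v w - lc w v = br v w
  xi : X
  lc_xi : ∀ v, lc v xi = v
  conn_xi : ∀ v, conn v xi = v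


namespace ASKAux

variable {F : Type u} {X : Type v} [CommRing F] [Algebra ℝ F]
  [AddCommGroup X] [Module F X] (A : ASK F X)

lemma g_negl (v w : X) : A.g (-v) w = -A.g v w := by
  rw [← neg_one_smul F v, A.g_smull]; ring

lemma g_addr (u v w : X) : A.g u (v + w) = A.g u v + A.g u w := by
  rw [A.g_symm, A.g_addl, A.g_symm v u, A.g_symm w u]

lemma g_negr (v w : X) : A.g v (-w) = -A.g v w := by
  rw [A.g_symm, g_negl, A.g_symm]

lemma g_subl (u v w : X) : A.g (u - v) w = A.g u w - A.g v w := by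
  rw [sub_eq_add_neg, A.g_addl, g_negl, ← sub_eq_add_neg]

lemma g_subr (u v w : X) : A.g u (v - w) = A.g u v - A.g u w := by
  rw [A.g_symm, g_subl, A.g_symm v u, A.g_symm w u]

lemma g_J_skew (a b : X) : A.g (A.J a) b = -A.g a (A.J b) := by
  have h := A.g_hermitian a (A.J b)
  rw [A.J_sq, g_negr] at h
  linear_combination -h

/-- `(∇_u J) w`. -/
def Ndag (u w : X) : X := A.conn u (A.J w) - A.J (A.conn u w)

lemma Ndag_symm (u w : X) : Ndag A u w = Ndag A w u := A.dconnJ u w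

lemma covg_J (u v w : X) : A.covg u (A.J v) w = -A.g (Ndag A u v) w := by
  have h := A.conn_omega u v w
  unfold ASK.covg Ndag
  rw [g_subl]
  linear_combination h

lemma covg_key (u v w : X) : A.covg u v w = A.g (A.J v) (Ndag A u w) := by
  have e1 := covg_J A u v (A.J w)
  have e2 : A.covg u (A.J v) (A.J w)
      = A.covg u v w - A.g (Ndag A u v) (A.J w) - A.g (A.J v) (Ndag A u w) := by
    have hc1 : A.conn u (A.J v) = Ndag A u v + A.J (A.conn u v) := by
      unfold Ndag; abel
    have hc2 : A.conn u (A.J w) = Ndag A u w + A.J (A.conn u w) := by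
      unfold Ndag; abel
    unfold ASK.covg
    rw [A.g_hermitian, hc1, hc2, A.g_addl, g_addr, A.g_hermitian, A.g_hermitian]
    ring
  linear_combination e1 - e2

lemma covg_symm23 (u v w : X) : A.covg u v w = A.covg u w v := by
  unfold ASK.covg
  rw [A.g_symm v w, A.g_symm (A.conn u v) w, A.g_symm v (A.conn u w)]
  ring

lemma covg_symm13 (u v w : X) : A.covg u v w = A.covg w v u := by
  rw [covg_key, covg_key, Ndag_symm]

end ASKAux

/-- On an ASK manifold, the difference tensor of the Levi-Civita
connection `D` and `∇` satisfies `D_X - ∇_X = (1/2) S_X = -(1/2) J (∇_X J)`. -/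
theorem difference_tensor {F : Type u} {X : Type v} [CommRing F]
    [Algebra ℝ F] [AddCommGroup X] [Module F X] (A : ASK F X)
    (S : X → X → X) (hS : ∀ u v w, A.g (S u v) w = A.covg u v w)
    (D : X → X → X)
    (hDmetric : ∀ u v w, A.act u (A.g v w) = A.g (D u v) w + A.g v (D u w))
    (hDtf : ∀ v w, D v w - D w v = A.br v w) :
    ∀ u v, D u v - A.conn u v = (algebraMap ℝ F (1/2 : ℝ)) • S u v ∧
      D u v - A.conn u v
        = -((algebraMap ℝ F (1/2 : ℝ)) • A.J (A.conn u (A.J v) - A.J (A.conn u v))) := by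
  intro u v
  have Tsymm : ∀ a b, D a b - A.conn a b = D b a - A.conn b a := by
    intro a b
    have key := (hDtf a b).trans (A.torsion_free a b).symm
    have h0 : D a b - A.conn a b - (D b a - A.conn b a) = 0 := by
      calc D a b - A.conn a b - (D b a - A.conn b a)
          = (D a b - D b a) - (A.conn a b - A.conn b a) := by abel
        _ = 0 := by rw [key]; exact sub_self _
    exact sub_eq_zero.mp h0
  have covg_T : ∀ a b c, A.covg a b c
      = A.g (D a b - A.conn a b) c + A.g b (D a c - A.conn a c) := by
    intro a b c
    unfold ASK.covg
    rw [hDmetric, ASKAux.g_subl, ASKAux.g_subr]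
    ring
  have hTsum : ∀ w,
      A.g ((D u v - A.conn u v) + (D u v - A.conn u v) - S u v) w = 0 := by
    intro w
    have h1 := covg_T u v w
    have h2 := covg_T v w u
    have h3 := covg_T w u v
    rw [Tsymm v u] at h2
    rw [Tsymm w u, Tsymm w v] at h3
    rw [ASKAux.covg_symm13 A, ASKAux.covg_symm23 A] at h2
    rw [ASKAux.covg_symm23 A, ASKAux.covg_symm13 A] at h3
    have gs1 := A.g_symm v (D u w - A.conn u w)
    have gs2 := A.g_symm w (D u v - A.conn u v)
    have gs3 := A.g_symm u (D v w - A.conn v w)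
    have hS' := hS u v w
    rw [ASKAux.g_subl, A.g_addl]
    linear_combination -h1 - h2 + h3 - hS' - gs1 - gs2 + gs3
  have hSsum : S u v = (D u v - A.conn u v) + (D u v - A.conn u v) :=
    (sub_eq_zero.mp (A.g_nondeg _ hTsum)).symm
  have half : ∀ t : X, (algebraMap ℝ F (1/2 : ℝ)) • (t + t) = t := by
    intro t
    rw [smul_add, ← add_smul, ← map_add]
    norm_num
  have first : D u v - A.conn u v = (algebraMap ℝ F (1/2 : ℝ)) • S u v := by
    rw [hSsum, half]
  have hSJ : S u v = -A.J (A.conn u (A.J v) - A.J (A.conn u v)) := by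
    have hw : ∀ w,
        A.g (S u v + A.J (A.conn u (A.J v) - A.J (A.conn u v))) w = 0 := by
      intro w
      have h1 := hS u v w
      have h2 := ASKAux.covg_symm23 A u v w
      have h3 := ASKAux.covg_key A u w v
      have h4 := ASKAux.g_J_skew A w (ASKAux.Ndag A u v)
      have h5 := A.g_symm w (A.J (ASKAux.Ndag A u v))
      unfold ASKAux.Ndag at h3 h4 h5
      rw [A.g_addl]
      linear_combination h1 + h2 + h3 + h4 - h5
    exact eq_neg_of_add_eq_zero_left (A.g_nondeg _ hw)
  refine ⟨first, ?_⟩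
  rw [first, hSJ, smul_neg]
end

section
/- Let (M,g,J,∇,ξ) be a conical affine special Kähler manifold. Then the Riemann curvature tensor R of the Levi-Civita connection satisfies R(ξ,·)· = R(·,ξ)· = R(·,·)ξ = 0 and R(Jξ,·)· = R(·,Jξ)· = R(·,·)Jξ = 0. -/
universe u v

/-! The difference tensor `S = ∇ - D` between the flat connection `∇` and the Levi-Civita
connection `D` is symmetric, and `∇ω = 0` together with `d^∇J = 0` give `2 S_u = J ∘ ∇_u J`
(the paper's `g⁻¹∇g` is `-2S`). Hence `S_u` anticommutes with `J` and `D` commutes with `J`.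
Writing `∇ = D + S`, flatness of `∇` reads `R^D + [S, S] + d^D S = 0`; the first two terms commute
with `J` and the last anticommutes with it, so `R^D(u, v) = -[S_u, S_v]`. Finally
`S_u ξ = ∇_u ξ - D_u ξ = 0`, hence `S_u (Jξ) = -J S_u ξ = 0`, and by symmetry `S_ξ = S_{Jξ} = 0`. -/

lemma isUnit_two_of_algebra_real {F : Type u} [CommRing F] [Algebra ℝ F] : IsUnit (2 : F) := by
  have h := (IsUnit.mk0 (2 : ℝ) two_ne_zero).map (algebraMap ℝ F)
  rwa [map_ofNat] at h

namespace VFCalc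

variable {F : Type u} {X : Type v} [CommRing F] [Algebra ℝ F] [AddCommGroup X] [Module F X]
  (V : VFCalc F X)

lemma act_neg (v : X) (f : F) : V.act v (-f) = -V.act v f :=
  (AddMonoidHom.mk' (V.act v) (V.act_add v)).map_neg f

def curv (D : X → X → X) (u v w : X) : X :=
  D u (D v w) - D v (D u w) - D (V.br u v) w

end VFCalc

namespace ASK

variable {F : Type u} {X : Type v} [CommRing F] [Algebra ℝ F] [AddCommGroup X] [Module F X]
  (M : ASK F X)

lemma J_zero : M.J 0 = 0 := (AddMonoidHom.mk' M.J M.J_add).map_zero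

lemma J_neg (v : X) : M.J (-v) = -M.J v := (AddMonoidHom.mk' M.J M.J_add).map_neg v

lemma J_sub (v w : X) : M.J (v - w) = M.J v - M.J w :=
  (AddMonoidHom.mk' M.J M.J_add).map_sub v w

lemma eq_zero_of_J_eq_zero {v : X} (h : M.J v = 0) : v = 0 := by
  have hv := M.J_sq v
  rw [h, J_zero, zero_eq_neg] at hv
  exact hv

lemma conn_neg_right (u v : X) : M.conn u (-v) = -M.conn u v :=
  (AddMonoidHom.mk' (M.conn u) (M.conn_addr u)).map_neg v

lemma g_neg_left (v w : X) : M.g (-v) w = -M.g v w :=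
  (AddMonoidHom.mk' (M.g · w) (M.g_addl · · w)).map_neg v

lemma g_sub_left (u v w : X) : M.g (u - v) w = M.g u w - M.g v w :=
  (AddMonoidHom.mk' (M.g · w) (M.g_addl · · w)).map_sub u v

lemma g_sub_right (u v w : X) : M.g u (v - w) = M.g u v - M.g u w := by
  rw [M.g_symm, g_sub_left, M.g_symm v, M.g_symm w]

lemma eq_of_forall_g_eq {a b : X} (h : ∀ w, M.g a w = M.g b w) : a = b :=
  sub_eq_zero.mp (M.g_nondeg _ fun w => by rw [g_sub_left, h, sub_self])

lemma g_J_left (v w : X) : M.g (M.J v) w = -M.g v (M.J w) := by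
  rw [← M.g_hermitian, M.J_sq, g_neg_left]

def covJ (u v : X) : X := M.conn u (M.J v) - M.J (M.conn u v)

lemma conn_J (u v : X) : M.conn u (M.J v) = M.J (M.conn u v) + M.covJ u v :=
  (add_sub_cancel _ _).symm

lemma covJ_comm (u v : X) : M.covJ u v = M.covJ v u := M.dconnJ u v

lemma covJ_add_right (u v w : X) : M.covJ u (v + w) = M.covJ u v + M.covJ u w := by
  simp only [covJ, M.J_add, M.conn_addr]
  abel

lemma covJ_J (u v : X) : M.covJ u (M.J v) = -M.J (M.covJ u v) := by
  rw [covJ, M.J_sq, conn_neg_right, conn_J, M.J_add, M.J_sq]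
  abel

lemma covg_comm (u v w : X) : M.covg u v w = M.covg u w v := by
  rw [covg, covg, M.g_symm v w, M.g_symm (M.conn u v) w, M.g_symm v (M.conn u w)]
  ring

/-- `∇ω = 0` expresses `∇g` through `∇J`. -/
lemma covg_eq_g_J_covJ (u v w : X) : M.covg u v w = M.g (M.J w) (M.covJ u v) := by
  have h := M.conn_omega u (M.J v) w
  rw [M.J_sq, conn_J, M.J_add, M.J_sq, g_neg_left, g_neg_left, M.act_neg, M.g_addl,
    g_neg_left] at h
  rw [covg, M.g_symm (M.J w)]
  have hJ := M.g_J_left (M.covJ u v) w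
  linear_combination -h - hJ

lemma covg_comm_left (u v w : X) : M.covg u v w = M.covg v u w := by
  rw [covg_eq_g_J_covJ, covg_eq_g_J_covJ, covJ_comm]

structure IsLeviCivita (M : ASK F X) (D : X → X → X) : Prop where
  metric : ∀ u v w, M.act u (M.g v w) = M.g (D u v) w + M.g v (D u w)
  torsion_free : ∀ v w, D v w - D w v = M.br v w

def S (D : X → X → X) (u v : X) : X := M.conn u v - D u v

lemma conn_eq_add_S (D : X → X → X) (u v : X) : M.conn u v = D u v + M.S D u v :=
  (add_sub_cancel _ _).symm

lemma conn_sub_S (D : X → X → X) (u v : X) : M.conn u v - M.S D u v = D u v :=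
  sub_sub_cancel _ _

/-- The exterior covariant derivative `d^D S`, with `D_u v - D_v u` replaced by `[u, v]`. -/
def dS (D : X → X → X) (u v w : X) : X :=
  D u (M.S D v w) - D v (M.S D u w) + M.S D u (D v w) - M.S D v (D u w) - M.S D (M.br u v) w

lemma curv_conn (D : X → X → X) (u v w : X) :
    M.curv M.conn u v w
      = M.curv D u v w + (M.S D u (M.S D v w) - M.S D v (M.S D u w)) + M.dS D u v w := by
  rw [VFCalc.curv, M.conn_eq_add_S D v w, M.conn_eq_add_S D u w, M.conn_addr, M.conn_addr,
    M.conn_eq_add_S D u (D v w), M.conn_eq_add_S D u (M.S D v w),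
    M.conn_eq_add_S D v (D u w), M.conn_eq_add_S D v (M.S D u w),
    M.conn_eq_add_S D (M.br u v) w, VFCalc.curv, dS]
  abel

end ASK

namespace ASK.IsLeviCivita

variable {F : Type u} {X : Type v} [CommRing F] [Algebra ℝ F] [AddCommGroup X] [Module F X]
  {M : ASK F X} {D : X → X → X}

lemma S_comm (hD : M.IsLeviCivita D) (u v : X) : M.S D u v = M.S D v u := by
  rw [S, S, sub_eq_sub_iff_sub_eq_sub, M.torsion_free, hD.torsion_free]

lemma covg_eq (hD : M.IsLeviCivita D) (u v w : X) :
    M.covg u v w = -(M.g (M.S D u v) w + M.g v (M.S D u w)) := by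
  rw [covg, hD.metric, S, S, M.g_sub_left, M.g_sub_right]
  ring

lemma two_mul_g_S (hD : M.IsLeviCivita D) (u v w : X) :
    2 * M.g (M.S D u v) w = -M.covg u v w := by
  have huvw := hD.covg_eq u v w
  have hvuw := hD.covg_eq v u w
  have hwuv := hD.covg_eq w u v
  rw [← M.covg_comm_left, hD.S_comm v u, M.g_symm u] at hvuw
  rw [M.covg_comm, ← M.covg_comm_left, M.covg_comm, ← M.covg_comm_left, hD.S_comm w u,
    hD.S_comm w v, M.g_symm u] at hwuv
  rw [M.g_symm v] at huvw
  linear_combination huvw + hvuw - hwuv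

lemma two_smul_S (hD : M.IsLeviCivita D) (u v : X) :
    (2 : F) • M.S D u v = M.J (M.covJ u v) :=
  M.eq_of_forall_g_eq fun w => by
    rw [M.g_smull, hD.two_mul_g_S, M.covg_eq_g_J_covJ, M.g_J_left, neg_neg, M.g_symm w]

lemma S_add_right (hD : M.IsLeviCivita D) (u v w : X) :
    M.S D u (v + w) = M.S D u v + M.S D u w := by
  rw [← (isUnit_two_of_algebra_real (F := F)).smul_left_cancel, smul_add, hD.two_smul_S, hD.two_smul_S,
    hD.two_smul_S, M.covJ_add_right, M.J_add]

lemma S_neg_right (hD : M.IsLeviCivita D) (u v : X) : M.S D u (-v) = -M.S D u v :=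
  (AddMonoidHom.mk' (M.S D u) (hD.S_add_right u)).map_neg v

lemma S_zero_right (hD : M.IsLeviCivita D) (u : X) : M.S D u 0 = 0 :=
  (AddMonoidHom.mk' (M.S D u) (hD.S_add_right u)).map_zero

lemma S_J (hD : M.IsLeviCivita D) (u v : X) : M.S D u (M.J v) = -M.J (M.S D u v) := by
  rw [← (isUnit_two_of_algebra_real (F := F)).smul_left_cancel, smul_neg, ← M.J_smul, hD.two_smul_S,
    hD.two_smul_S, M.covJ_J, M.J_neg]

lemma add_right (hD : M.IsLeviCivita D) (u v w : X) : D u (v + w) = D u v + D u w := by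
  rw [← M.conn_sub_S D u (v + w), ← M.conn_sub_S D u v, ← M.conn_sub_S D u w, M.conn_addr,
    hD.S_add_right]
  abel

lemma neg_right (hD : M.IsLeviCivita D) (u v : X) : D u (-v) = -D u v :=
  (AddMonoidHom.mk' (D u) (hD.add_right u)).map_neg v

lemma J_comm (hD : M.IsLeviCivita D) (u v : X) : D u (M.J v) = M.J (D u v) := by
  have hS : M.J (M.S D u v) + M.J (M.S D u v) = -M.covJ u v := by
    rw [← M.J_add, ← two_smul F, hD.two_smul_S, M.J_sq]
  rw [← M.conn_sub_S D u (M.J v), ← M.conn_sub_S D u v, hD.S_J, M.conn_J, M.J_sub]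
  linear_combination (norm := abel) hS

lemma curv_J (hD : M.IsLeviCivita D) (u v w : X) :
    M.curv D u v (M.J w) = M.J (M.curv D u v w) := by
  simp only [VFCalc.curv, hD.J_comm, M.J_sub]

lemma dS_J (hD : M.IsLeviCivita D) (u v w : X) :
    M.dS D u v (M.J w) = -M.J (M.dS D u v w) := by
  simp only [dS, hD.J_comm, hD.S_J, hD.neg_right, M.J_sub, M.J_add]
  abel

lemma curv_eq (hD : M.IsLeviCivita D) (u v w : X) :
    M.curv D u v w = -(M.S D u (M.S D v w) - M.S D v (M.S D u w)) := by
  set E := M.curv D u v w + (M.S D u (M.S D v w) - M.S D v (M.S D u w))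
  have hsum : E + M.dS D u v w = 0 := (M.curv_conn D u v w).symm.trans (M.flat u v w)
  have hJ : M.J (E - M.dS D u v w) = 0 := by
    have h := (M.curv_conn D u v (M.J w)).symm.trans (M.flat u v (M.J w))
    rw [hD.curv_J, hD.dS_J, hD.S_J, hD.S_J, hD.S_neg_right, hD.S_neg_right, hD.S_J, hD.S_J] at h
    rw [M.J_sub, M.J_add, M.J_sub, ← h]
    abel
  have hdiff : E - M.dS D u v w = 0 := M.eq_zero_of_J_eq_zero hJ
  have hE : E = 0 := by
    rw [← (isUnit_two_of_algebra_real (F := F)).smul_left_cancel, smul_zero, two_smul]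
    linear_combination (norm := abel) hsum + hdiff
  rwa [eq_neg_iff_add_eq_zero]

lemma curv_eq_zero_of_S_eq_zero (hD : M.IsLeviCivita D) {z : X} (hz : ∀ v, M.S D z v = 0)
    (u v : X) : M.curv D z u v = 0 ∧ M.curv D u z v = 0 ∧ M.curv D u v z = 0 := by
  have hz' : ∀ v, M.S D v z = 0 := fun v => hD.S_comm v z ▸ hz v
  refine ⟨?_, ?_, ?_⟩ <;> simp [hD.curv_eq, hz, hz', hD.S_zero_right]

end ASK.IsLeviCivita

namespace CASK

variable {F : Type u} {X : Type v} [CommRing F] [Algebra ℝ F] [AddCommGroup X] [Module F X]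
  (C : CASK F X)

lemma isLeviCivita : C.IsLeviCivita C.lc := ⟨C.lc_metric, C.lc_torsion_free⟩

lemma S_xi_left (v : X) : C.S C.lc C.xi v = 0 := by
  rw [C.isLeviCivita.S_comm, ASK.S, C.conn_xi, C.lc_xi, sub_self]

lemma S_J_xi_left (v : X) : C.S C.lc (C.J C.xi) v = 0 := by
  rw [C.isLeviCivita.S_comm, C.isLeviCivita.S_J, ← C.isLeviCivita.S_comm, S_xi_left, C.J_zero,
    neg_zero]

end CASK

/-- On a CASK manifold, the Riemann curvature tensor of the Levi-Civita
connection vanishes whenever `ξ` or `Jξ` is inserted in any slot. -/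
theorem curvature_vanishes_on_xi {F : Type u} {X : Type v} [CommRing F]
    [Algebra ℝ F] [AddCommGroup X] [Module F X] (C : CASK F X) :
    ∀ u v : X,
      (C.lc C.xi (C.lc u v) - C.lc u (C.lc C.xi v) - C.lc (C.br C.xi u) v = 0) ∧
      (C.lc u (C.lc C.xi v) - C.lc C.xi (C.lc u v) - C.lc (C.br u C.xi) v = 0) ∧
      (C.lc u (C.lc v C.xi) - C.lc v (C.lc u C.xi) - C.lc (C.br u v) C.xi = 0) ∧
      (C.lc (C.J C.xi) (C.lc u v) - C.lc u (C.lc (C.J C.xi) v)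
        - C.lc (C.br (C.J C.xi) u) v = 0) ∧
      (C.lc u (C.lc (C.J C.xi) v) - C.lc (C.J C.xi) (C.lc u v)
        - C.lc (C.br u (C.J C.xi)) v = 0) ∧
      (C.lc u (C.lc v (C.J C.xi)) - C.lc v (C.lc u (C.J C.xi))
        - C.lc (C.br u v) (C.J C.xi) = 0) := by
  intro u v
  obtain ⟨hξ₁, hξ₂, hξ₃⟩ := C.isLeviCivita.curv_eq_zero_of_S_eq_zero C.S_xi_left u v
  obtain ⟨hJξ₁, hJξ₂, hJξ₃⟩ := C.isLeviCivita.curv_eq_zero_of_S_eq_zero C.S_J_xi_left u v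
  exact ⟨hξ₁, hξ₂, hξ₃, hJξ₁, hJξ₂, hJξ₃⟩
end

section
/- Let (M,g,J,∇,ξ) be a conical affine special Kähler manifold and let N = T*M with the rigid c-map pseudo-hyper-Kähler structure, where TN ≅ π*TM ⊕ π*T*M via ∇, g_N = g ⊕ g^{-1}. Let Z := −(horizontal lift of Jξ) and ℍZ := span{Z, I₁Z, I₂Z, I₃Z}. Then the Riemann curvature tensor Rm_N of g_N vanishes whenever at least two of its four arguments belong to ℍZ. -/
/-- Let `(M,g,J,∇,ξ)` be a conical affine special Kähler manifold and
`N = T*M` the rigid c-map space.  Working pointwise, `W` models a tangent space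
`T_pM`, so that `T_pN ≅ W × W` (horizontal ⊕ vertical, the vertical factor being
identified with `W` via the musical isomorphism `♯`).  The data are:
* `g` the ASK metric, `J` the complex structure, `ξ` the Euler field,
* `S` the `(1,2)`-tensor `g⁻¹∇g` (symmetric, vanishing on `span{ξ, Jξ}`),
* `T` the totally symmetric tensor `∇²g` (vanishing on `span{ξ, Jξ}`),
* `Rm` the lowered Riemann curvature of the rigid c-map metric `g_N = g ⊕ g⁻¹`,
  a multilinear `(0,4)`-tensor with the curvature symmetries, whose components in
  the horizontal/vertical splitting are given by the rigid c-map curvature formulas.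
Under the identification, `Z = -(Jξ)^H`, `I₁Z = ξ^H`, `I₂Z = (ξ^♭)^V ↦ ξ`,
`I₃Z = ((-Jξ)^♭)^V ↦ -Jξ`, so the distribution `ℍZ = span{Z, I₁Z, I₂Z, I₃Z}` is
`span{ξ, Jξ} × span{ξ, Jξ} ⊆ W × W`.  Conclusion: `Rm` vanishes whenever at least
two of its four arguments belong to `ℍZ`. -/
theorem rigid_cmap_curvature_vanishes_on_HZ
    {W : Type*} [AddCommGroup W] [Module ℝ W]
    (g : W →ₗ[ℝ] W →ₗ[ℝ] ℝ) (J : W →ₗ[ℝ] W) (ξ : W)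
    (S : W → W → W) (T : W → W → W → W → ℝ)
    (Rm : W × W → W × W → W × W → W × W → ℝ)
    -- symmetry and vanishing properties of S = g⁻¹∇g
    (hS_symm : ∀ a b, S a b = S b a)
    (hS_g : ∀ a b c, g (S a b) c = g (S a c) b)
    (hS_zero : ∀ a b, a ∈ Submodule.span ℝ ({ξ, J ξ} : Set W) → S a b = 0)
    -- total symmetry and vanishing of T = ∇²g
    (hT_symm₁ : ∀ a b c d, T a b c d = T b a c d)
    (hT_symm₂ : ∀ a b c d, T a b c d = T a c b d)
    (hT_symm₃ : ∀ a b c d, T a b c d = T a b d c)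
    (hT_zero : ∀ a b c d, a ∈ Submodule.span ℝ ({ξ, J ξ} : Set W) → T a b c d = 0)
    -- multilinearity of Rm
    (hRm_lin₁ : ∀ B C X, IsLinearMap ℝ (fun A => Rm A B C X))
    (hRm_lin₂ : ∀ A C X, IsLinearMap ℝ (fun B => Rm A B C X))
    (hRm_lin₃ : ∀ A B X, IsLinearMap ℝ (fun C => Rm A B C X))
    (hRm_lin₄ : ∀ A B C, IsLinearMap ℝ (fun X => Rm A B C X))
    -- curvature symmetries of Rm
    (hRm_skew₁₂ : ∀ A B C X, Rm A B C X = -Rm B A C X)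
    (hRm_skew₃₄ : ∀ A B C X, Rm A B C X = -Rm A B X C)
    (hRm_pair : ∀ A B C X, Rm A B C X = Rm C X A B)
    -- the rigid c-map curvature components (Theorem on the curvature of N = T*M)
    (hHHHH : ∀ a b c x : W, Rm (a, 0) (b, 0) (c, 0) (x, 0)
      = -(1 / 4) * g (S a (S b c) - S b (S a c)) x)
    (hHHHV : ∀ (a b c χ : W), Rm (a, 0) (b, 0) (c, 0) (0, χ) = 0)
    (hHHVV : ∀ (a b γ χ : W), Rm (a, 0) (b, 0) (0, γ) (0, χ)
      = -(1 / 4) * g (S a (S b γ) - S b (S a γ)) χ)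
    (hHVHV : ∀ (a β c χ : W), Rm (a, 0) (0, β) (c, 0) (0, χ)
      = (1 / 2) * g (S a (S c χ)) β + (1 / 4) * g (S c (S a χ)) β
        + (1 / 4) * g (S a c) (S β χ) - (1 / 2) * T a β c χ)
    (hHVVV : ∀ (a β γ χ : W), Rm (a, 0) (0, β) (0, γ) (0, χ) = 0)
    (hVVVV : ∀ (α β γ χ : W), Rm (0, α) (0, β) (0, γ) (0, χ)
      = -(1 / 4) * g (S α (S β γ) - S β (S α γ)) χ) :
    -- conclusion: Rm vanishes if at least two arguments lie in ℍZ
    ∀ A B C X : W × W,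
      (∃ i j : Fin 4, i ≠ j ∧
        (![A, B, C, X] i) ∈ (Submodule.span ℝ ({ξ, J ξ} : Set W)).prod
          (Submodule.span ℝ ({ξ, J ξ} : Set W)) ∧
        (![A, B, C, X] j) ∈ (Submodule.span ℝ ({ξ, J ξ} : Set W)).prod
          (Submodule.span ℝ ({ξ, J ξ} : Set W))) →
      Rm A B C X = 0 := by
  intro A B C X h
  set E := Submodule.span ℝ ({ξ, J ξ} : Set W) with hE
  have hz : (0 : W) ∈ E := Submodule.zero_mem _
  -- S vanishes if either argument is in E
  have hS0 : ∀ a b : W, a ∈ E ∨ b ∈ E → S a b = 0 := by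
    rintro a b (h' | h')
    · exact hS_zero a b h'
    · rw [hS_symm]; exact hS_zero b a h'
  -- T vanishes if any argument is in E
  have hT0 : ∀ a b c d : W, (a ∈ E ∨ b ∈ E ∨ c ∈ E ∨ d ∈ E) → T a b c d = 0 := by
    rintro a b c d (h' | h' | h' | h')
    · exact hT_zero a b c d h'
    · rw [hT_symm₁]; exact hT_zero b a c d h'
    · rw [hT_symm₂, hT_symm₁]; exact hT_zero c a b d h'
    · rw [hT_symm₃, hT_symm₂, hT_symm₁]; exact hT_zero d a b c h'
  -- additivity in each slot
  have step1 : ∀ (B C X u v : W × W), Rm (u + v) B C X = Rm u B C X + Rm v B C X :=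
    fun B C X u v => (hRm_lin₁ B C X).map_add u v
  have step2 : ∀ (A C X u v : W × W), Rm A (u + v) C X = Rm A u C X + Rm A v C X :=
    fun A C X u v => (hRm_lin₂ A C X).map_add u v
  have step3 : ∀ (A B X u v : W × W), Rm A B (u + v) X = Rm A B u X + Rm A B v X :=
    fun A B X u v => (hRm_lin₃ A B X).map_add u v
  have step4 : ∀ (A B C u v : W × W), Rm A B C (u + v) = Rm A B C u + Rm A B C v :=
    fun A B C u v => (hRm_lin₄ A B C).map_add u v
  -- Rm vanishes if the first argument is horizontal with component in E
  have keyH : ∀ a : W, a ∈ E → ∀ B C X : W × W, Rm (a, 0) B C X = 0 := by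
    intro a ha B C X
    obtain ⟨b, β⟩ := B; obtain ⟨c, γ⟩ := C; obtain ⟨x, χ⟩ := X
    have t1 : Rm (a, 0) (b, 0) (c, 0) (x, 0) = 0 := by
      rw [hHHHH, hS0 a (S b c) (Or.inl ha), hS0 a c (Or.inl ha), hS0 b 0 (Or.inr hz)]
      simp
    have t2 : Rm (a, 0) (b, 0) (c, 0) (0, χ) = 0 := hHHHV a b c χ
    have t3 : Rm (a, 0) (b, 0) (0, γ) (x, 0) = 0 := by
      rw [hRm_skew₃₄, hHHHV]; simp
    have t4 : Rm (a, 0) (b, 0) (0, γ) (0, χ) = 0 := by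
      rw [hHHVV, hS0 a (S b γ) (Or.inl ha), hS0 a γ (Or.inl ha), hS0 b 0 (Or.inr hz)]
      simp
    have t5 : Rm (a, 0) (0, β) (c, 0) (x, 0) = 0 := by
      rw [hRm_pair, hHHHV]
    have t6 : Rm (a, 0) (0, β) (c, 0) (0, χ) = 0 := by
      rw [hHVHV, hS0 a (S c χ) (Or.inl ha), hS0 a χ (Or.inl ha), hS0 c 0 (Or.inr hz),
        hS0 a c (Or.inl ha), hT0 a β c χ (Or.inl ha)]
      simp
    have t7 : Rm (a, 0) (0, β) (0, γ) (x, 0) = 0 := by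
      rw [hRm_skew₃₄, hHVHV, hS0 a (S x γ) (Or.inl ha), hS0 a γ (Or.inl ha),
        hS0 x 0 (Or.inr hz), hS0 a x (Or.inl ha), hT0 a β x γ (Or.inl ha)]
      simp
    have t8 : Rm (a, 0) (0, β) (0, γ) (0, χ) = 0 := hHVVV a β γ χ
    have eB : ((b, β) : W × W) = (b, 0) + (0, β) := by simp
    have eC : ((c, γ) : W × W) = (c, 0) + (0, γ) := by simp
    have eX : ((x, χ) : W × W) = (x, 0) + (0, χ) := by simp
    rw [eB, step2, eC, step3, step3, eX, step4, step4, step4, step4,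
      t1, t2, t3, t4, t5, t6, t7, t8]
    ring
  -- Rm vanishes if the first argument is vertical with component in E
  have keyV : ∀ α : W, α ∈ E → ∀ B C X : W × W, Rm (0, α) B C X = 0 := by
    intro α hα B C X
    obtain ⟨b, β⟩ := B; obtain ⟨c, γ⟩ := C; obtain ⟨x, χ⟩ := X
    have t1 : Rm (0, α) (b, 0) (c, 0) (x, 0) = 0 := by
      rw [hRm_pair, hRm_skew₃₄, hHHHV]; simp
    have t2 : Rm (0, α) (b, 0) (c, 0) (0, χ) = 0 := by
      rw [hRm_skew₁₂, hHVHV, hS_g b (S c χ) α, hS_g c (S b χ) α,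
        hS0 b α (Or.inr hα), hS0 c α (Or.inr hα), hS0 α χ (Or.inl hα),
        hT0 b α c χ (Or.inr (Or.inl hα))]
      simp
    have t3 : Rm (0, α) (b, 0) (0, γ) (x, 0) = 0 := by
      rw [hRm_skew₁₂, hRm_skew₃₄, hHVHV, hS_g b (S x γ) α, hS_g x (S b γ) α,
        hS0 b α (Or.inr hα), hS0 x α (Or.inr hα), hS0 α γ (Or.inl hα),
        hT0 b α x γ (Or.inr (Or.inl hα))]
      simp
    have t4 : Rm (0, α) (b, 0) (0, γ) (0, χ) = 0 := by
      rw [hRm_skew₁₂, hHVVV]; simp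
    have t5 : Rm (0, α) (0, β) (c, 0) (x, 0) = 0 := by
      rw [hRm_pair, hHHVV, hS0 x α (Or.inr hα), hS0 c α (Or.inr hα),
        hS0 c 0 (Or.inr hz), hS0 x 0 (Or.inr hz)]
      simp
    have t6 : Rm (0, α) (0, β) (c, 0) (0, χ) = 0 := by
      rw [hRm_pair, hHVVV]
    have t7 : Rm (0, α) (0, β) (0, γ) (x, 0) = 0 := by
      rw [hRm_skew₃₄, hRm_pair, hHVVV]; simp
    have t8 : Rm (0, α) (0, β) (0, γ) (0, χ) = 0 := by
      rw [hVVVV, hS0 α (S β γ) (Or.inl hα), hS0 α γ (Or.inl hα), hS0 β 0 (Or.inr hz)]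
      simp
    have eB : ((b, β) : W × W) = (b, 0) + (0, β) := by simp
    have eC : ((c, γ) : W × W) = (c, 0) + (0, γ) := by simp
    have eX : ((x, χ) : W × W) = (x, 0) + (0, χ) := by simp
    rw [eB, step2, eC, step3, step3, eX, step4, step4, step4, step4,
      t1, t2, t3, t4, t5, t6, t7, t8]
    ring
  -- Rm vanishes if the first argument is in E × E
  have keyA : ∀ A' : W × W, A' ∈ E.prod E → ∀ B' C' X' : W × W, Rm A' B' C' X' = 0 := by
    intro A' hA' B' C' X'
    obtain ⟨h1, h2⟩ := Submodule.mem_prod.mp hA'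
    have eA : A' = (A'.1, 0) + (0, A'.2) := by simp
    rw [eA, step1, keyH A'.1 h1, keyV A'.2 h2]
    ring
  -- transfer to the other slots via the symmetries
  have keyB : ∀ A' B' C' X' : W × W, B' ∈ E.prod E → Rm A' B' C' X' = 0 := by
    intro A' B' C' X' hB'
    rw [hRm_skew₁₂, keyA B' hB']; ring
  have keyC : ∀ A' B' C' X' : W × W, C' ∈ E.prod E → Rm A' B' C' X' = 0 := by
    intro A' B' C' X' hC'
    rw [hRm_pair]; exact keyA C' hC' X' A' B'
  have keyX : ∀ A' B' C' X' : W × W, X' ∈ E.prod E → Rm A' B' C' X' = 0 := by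
    intro A' B' C' X' hX'
    rw [hRm_pair, hRm_skew₁₂, keyA X' hX']; ring
  obtain ⟨i, j, hij, hi, hj⟩ := h
  fin_cases i
  · simp only [Matrix.cons_val_zero] at hi
    exact keyA A hi B C X
  · simp only [Matrix.cons_val_one, Matrix.head_cons] at hi
    exact keyB A B C X hi
  · simp only [Matrix.cons_val_two, Matrix.tail_cons, Matrix.head_cons] at hi
    exact keyC A B C X hi
  · simp only [Matrix.cons_val_three, Matrix.tail_cons, Matrix.head_cons] at hi
    exact keyX A B C X hi
end
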